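/- arXiv:cond-mat/0006001 — 4 statements merged into one kernel-verified Lean document; each statement's English description precedes it below -/
import Mathlib

section
/- Let M be geometric on {1,2,...} with mean e^{2ρτ_x} where τ_x = (1/(2ρ))((1/2)log(Lρ) + x), Lρ ≥ 16, and -(1/2)log(Lρ) ≤ x ≤ (1/4)log(Lρ). Then E[log M] ≤ (5/4) log(Lρ). -/
open MeasureTheory

/-- Bound on `E[log M]` for the geometric law of the Yule process at time `τ_x`. -/
theorem geometric_logM_bound
    {Ω : Type*} [MeasurableSpace Ω] (μ : Measure Ω) [IsProbabilityMeasure μ]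
    (M : Ω → ℕ) (hM : Measurable M) (L ρ x : ℝ) (hρ : 0 < ρ)
    (hL : 16 ≤ L * ρ)
    (hx1 : -(1 / 2) * Real.log (L * ρ) ≤ x) (hx2 : x ≤ (1 / 4) * Real.log (L * ρ))
    (τ : ℝ) (hτ : τ = (1 / (2 * ρ)) * ((1 / 2) * Real.log (L * ρ) + x))
    (q : ℝ) (hq : q = Real.exp (-(2 * ρ * τ)))
    (hpmf : ∀ m : ℕ, 1 ≤ m → μ {ω | M ω = m} = ENNReal.ofReal (q * (1 - q) ^ (m - 1)))
    (h0 : μ {ω | M ω = 0} = 0) :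
    ∫ ω, Real.log (M ω) ∂μ
      ≤ (5 / 4) * Real.log (L * ρ) := by
  set Λ := Real.log (L * ρ) with hΛ
  have hΛ2 : 2 ≤ Λ := by
    rw [hΛ, Real.le_log_iff_exp_le (by linarith : (0:ℝ) < L * ρ)]
    have h1 : Real.exp 1 < 2.7182818286 := Real.exp_one_lt_d9
    have h2 : Real.exp 2 = Real.exp 1 * Real.exp 1 := by
      rw [← Real.exp_add]; norm_num
    nlinarith [Real.exp_pos 1]
  -- set up `a = 2ρτ`
  set a := 2 * ρ * τ with ha
  have haval : a = (1 / 2) * Λ + x := by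
    rw [ha, hτ]; field_simp
  have ha0 : 0 ≤ a := by rw [haval]; linarith
  have hq0 : 0 < q := by rw [hq]; exact Real.exp_pos _
  have hq1 : q ≤ 1 := by
    rw [hq]; exact Real.exp_le_one_iff.mpr (by linarith)
  have hr0 : (0:ℝ) ≤ 1 - q := by linarith
  have hr1 : 1 - q < 1 := by linarith
  have hlogq : Real.log q = -a := by rw [hq, Real.log_exp]
  -- pointwise bound: log (n+1) ≤ a + q*(n+1)
  have hpt : ∀ n : ℕ, Real.log ((n:ℝ) + 1) ≤ a + q * ((n:ℝ) + 1) := by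
    intro n
    have hn1 : (0:ℝ) < (n:ℝ) + 1 := by positivity
    have h1 : Real.log (q * ((n:ℝ) + 1)) = -a + Real.log ((n:ℝ) + 1) := by
      rw [Real.log_mul (ne_of_gt hq0) (ne_of_gt hn1), hlogq]
    have h2 : Real.log (q * ((n:ℝ) + 1)) ≤ q * ((n:ℝ) + 1) - 1 :=
      Real.log_le_sub_one_of_pos (by positivity)
    linarith
  -- the comparison series
  set g : ℕ → ℝ := fun n => (a + q * ((n:ℝ) + 1)) * (q * (1 - q) ^ n) with hg
  have hgeq : g = fun n : ℕ => (a * q + q ^ 2) * (1 - q) ^ n + q ^ 2 * ((n:ℝ) * (1 - q) ^ n) := by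
    funext n; simp only [hg]; ring
  have hnorm : ‖1 - q‖ < 1 := by rw [Real.norm_eq_abs, abs_of_nonneg hr0]; exact hr1
  have hs1 : Summable fun n : ℕ => (1 - q) ^ n := summable_geometric_of_lt_one hr0 hr1
  have hs2 : Summable fun n : ℕ => (n:ℝ) * (1 - q) ^ n := by
    have := summable_pow_mul_geometric_of_norm_lt_one (R := ℝ) 1 hnorm
    simpa [pow_one] using this
  have hgsum : Summable g := by
    rw [hgeq]; exact (hs1.mul_left _).add (hs2.mul_left _)
  have ht1 : ∑' n : ℕ, (1 - q) ^ n = q⁻¹ := by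
    rw [tsum_geometric_of_lt_one hr0 hr1]; ring_nf
  have ht2 : ∑' n : ℕ, (n:ℝ) * (1 - q) ^ n = (1 - q) / q ^ 2 := by
    rw [tsum_coe_mul_geometric_of_norm_lt_one hnorm]; ring_nf
  have htsum : ∑' n, g n = a + 1 := by
    rw [hgeq, Summable.tsum_add (hs1.mul_left _) (hs2.mul_left _), tsum_mul_left, tsum_mul_left,
      ht1, ht2]
    field_simp
    ring
  have hgnn : ∀ n : ℕ, 0 ≤ g n := by
    intro n
    apply mul_nonneg
    · have : (0:ℝ) ≤ q * ((n:ℝ) + 1) := by positivity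
      linarith
    · positivity
  -- nonnegativity and measurability of log M
  have hmeas : Measurable fun ω => Real.log (M ω) :=
    (measurable_from_nat (f := fun n : ℕ => Real.log n)).comp hM
  have hnn : 0 ≤ᵐ[μ] fun ω => Real.log (M ω) := by
    filter_upwards with ω
    rcases Nat.eq_zero_or_pos (M ω) with h | h
    · simp [h]
    · exact Real.log_nonneg (by exact_mod_cast h)
  rw [integral_eq_lintegral_of_nonneg_ae hnn hmeas.aestronglyMeasurable]
  -- rewrite the lintegral as a sum over ℕ
  have hmapmeas : Measurable fun n : ℕ => ENNReal.ofReal (Real.log n) := measurable_from_nat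
  have hmap : ∫⁻ ω, ENNReal.ofReal (Real.log (M ω)) ∂μ
      = ∫⁻ n, ENNReal.ofReal (Real.log n) ∂(μ.map M) :=
    (lintegral_map hmapmeas hM).symm
  have hν : ∀ n : ℕ, (μ.map M) {n} = μ {ω | M ω = n} := by
    intro n
    rw [Measure.map_apply hM (measurableSet_singleton n)]
    rfl
  have hkey : ∫⁻ ω, ENNReal.ofReal (Real.log (M ω)) ∂μ ≤ ENNReal.ofReal (a + 1) := by
    rw [hmap, lintegral_countable']
    rw [tsum_eq_zero_add' ENNReal.summable]
    have hz : ENNReal.ofReal (Real.log ((0:ℕ):ℝ)) * (μ.map M) {0} = 0 := by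
      simp [Real.log_zero]
    rw [hz, zero_add]
    calc ∑' n : ℕ, ENNReal.ofReal (Real.log ((n + 1 : ℕ) : ℝ)) * (μ.map M) {n + 1}
        ≤ ∑' n : ℕ, ENNReal.ofReal (g n) := by
          apply ENNReal.tsum_le_tsum
          intro n
          rw [hν, hpmf (n + 1) (by omega)]
          simp only [Nat.add_sub_cancel]
          rw [← ENNReal.ofReal_mul (by
            apply Real.log_nonneg
            push_cast
            linarith [Nat.cast_nonneg (α := ℝ) n])]
          apply ENNReal.ofReal_le_ofReal
          have hw : (0:ℝ) ≤ q * (1 - q) ^ n := by positivity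
          have := hpt n
          have hb : Real.log ((n + 1 : ℕ) : ℝ) ≤ a + q * ((n:ℝ) + 1) := by
            push_cast; push_cast at this; linarith
          calc Real.log ((n + 1 : ℕ) : ℝ) * (q * (1 - q) ^ n)
              ≤ (a + q * ((n:ℝ) + 1)) * (q * (1 - q) ^ n) :=
                mul_le_mul_of_nonneg_right hb hw
            _ = g n := rfl
      _ = ENNReal.ofReal (∑' n, g n) := (ENNReal.ofReal_tsum_of_nonneg hgnn hgsum).symm
      _ = ENNReal.ofReal (a + 1) := by rw [htsum]
  have hfin : (∫⁻ ω, ENNReal.ofReal (Real.log (M ω)) ∂μ).toReal ≤ a + 1 := by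
    have := ENNReal.toReal_mono ENNReal.ofReal_ne_top hkey
    rwa [ENNReal.toReal_ofReal (by linarith)] at this
  have : a + 1 ≤ (5 / 4) * Λ := by rw [haval]; linarith
  linarith
end

section
/- Let T be a random variable with P[T > x] = ∫_0^∞ e^{-y}/(1 + e^{2x} y) dy for all real x. Then E[T] = γ/2, where γ is the Euler–Mascheroni constant. -/
/-!
Write `E T = ∫₀^∞ P(T > x) dx - ∫₀^∞ P(T ≤ -x) dx`. Both tails are integrals over `y` of `e^{-y}`
against a kernel `a / (a + b e^{2x})` (with `(a, b) = (1, y)`, resp. `(y, 1)`), whose integral over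
`x ∈ (0, ∞)` is `(log (a + b) - log b) / 2`, an antiderivative being `-log (a e^{-2x} + b) / 2`.
After Tonelli the `log (1 + y)` terms cancel, leaving
`E T = -½ ∫₀^∞ e^{-y} log y dy = -Γ'(1) / 2 = γ / 2`.
-/

open MeasureTheory Set Real Filter Function

section Tonelli

variable {α β : Type*} [MeasurableSpace α] [MeasurableSpace β] {μ : Measure α} {ν : Measure β}

theorem integrable_uncurry_of_nonneg [SFinite μ] [SFinite ν] {f : α → β → ℝ}
    (hf : AEStronglyMeasurable (uncurry f) (μ.prod ν))
    (hf_nonneg : ∀ᵐ y ∂ν, ∀ᵐ x ∂μ, 0 ≤ f x y)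
    (hf_int : ∀ᵐ y ∂ν, Integrable (f · y) μ)
    (h_int : Integrable (fun y => ∫ x, f x y ∂μ) ν) :
    Integrable (uncurry f) (μ.prod ν) := by
  refine (integrable_prod_iff' hf).2 ⟨hf_int, h_int.congr ?_⟩
  filter_upwards [hf_nonneg] with y hy
  exact integral_congr_ae (by filter_upwards [hy] with x hx using (norm_of_nonneg hx).symm)

end Tonelli

section LayerCake

variable {α : Type*} [MeasurableSpace α] {μ : Measure α} [IsFiniteMeasure μ]

theorem integrable_of_integrableOn_measureReal_lt {f : α → ℝ} (hf_nonneg : 0 ≤ᵐ[μ] f)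
    (hf : AEMeasurable f μ) (h : IntegrableOn (fun t => μ.real {a | t < f a}) (Ioi 0)) :
    Integrable f μ := by
  refine ⟨hf.aestronglyMeasurable, ?_⟩
  rw [hasFiniteIntegral_iff_ofReal hf_nonneg, lintegral_eq_lintegral_meas_lt μ hf_nonneg hf]
  convert h.lintegral_lt_top using 3 with t
  rw [ofReal_measureReal]

theorem integrable_and_integral_eq_integral_measureReal_lt_sub {X : α → ℝ}
    (hX : AEMeasurable X μ)
    (h_pos : IntegrableOn (fun t => μ.real {a | t < X a}) (Ioi 0))
    (h_neg : IntegrableOn (fun t => μ.real {a | X a ≤ -t}) (Ioi 0)) :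
    Integrable X μ ∧ ∫ a, X a ∂μ =
      (∫ t in Ioi 0, μ.real {a | t < X a}) - ∫ t in Ioi 0, μ.real {a | X a ≤ -t} := by
  have h_posPart : ∀ t ∈ Ioi (0 : ℝ), {a | t < max (X a) 0} = {a | t < X a} := fun t ht => by
    ext a; simp [not_lt.2 (mem_Ioi.1 ht).le]
  have h_negPart : ∀ t ∈ Ioi (0 : ℝ), {a | t ≤ max (-X a) 0} = {a | X a ≤ -t} := fun t ht => by
    ext a; simp [not_le.2 (mem_Ioi.1 ht), le_neg]
  have h_nonneg_pos : 0 ≤ᵐ[μ] fun a => max (X a) 0 := ae_of_all _ fun _ => le_max_right _ _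
  have h_nonneg_neg : 0 ≤ᵐ[μ] fun a => max (-X a) 0 := ae_of_all _ fun _ => le_max_right _ _
  have h_int_pos : Integrable (fun a => max (X a) 0) μ :=
    integrable_of_integrableOn_measureReal_lt h_nonneg_pos (hX.max aemeasurable_const)
      (h_pos.congr_fun (fun t ht => by simp only [h_posPart t ht]) measurableSet_Ioi)
  have h_int_neg : Integrable (fun a => max (-X a) 0) μ := by
    refine integrable_of_integrableOn_measureReal_lt h_nonneg_neg (hX.neg.max aemeasurable_const)
      (h_neg.congr_fun_ae ?_)
    filter_upwards [meas_le_ae_eq_meas_lt μ (volume.restrict (Ioi 0)) fun a => max (-X a) 0,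
      ae_restrict_mem measurableSet_Ioi] with t ht ht_pos
    simp only [measureReal_def, ← h_negPart t ht_pos, ht]
  have h_split : ∀ a, max (X a) 0 - max (-X a) 0 = X a := fun a =>
    max_zero_sub_max_neg_zero_eq_self (X a)
  refine ⟨(h_int_pos.sub h_int_neg).congr (ae_of_all _ h_split), ?_⟩
  rw [← integral_congr_ae (ae_of_all _ h_split), integral_sub h_int_pos h_int_neg,
    h_int_pos.integral_eq_integral_meas_lt h_nonneg_pos,
    h_int_neg.integral_eq_integral_meas_le h_nonneg_neg]
  congr 1 <;> refine setIntegral_congr_fun measurableSet_Ioi fun t ht => ?_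
  · simp only [h_posPart t ht]
  · simp only [h_negPart t ht]

end LayerCake

section ExpIntegral

variable {a b : ℝ}

theorem hasDerivAt_neg_log_mul_exp_add_div_two (ha : 0 ≤ a) (hb : 0 < b) (x : ℝ) :
    HasDerivAt (fun x => -log (a * exp (-(2 * x)) + b) / 2) (a / (a + b * exp (2 * x))) x := by
  have h_pos : 0 < a * exp (-(2 * x)) + b := by positivity
  have h_exp : HasDerivAt (fun x => a * exp (-(2 * x)) + b) (a * (exp (-(2 * x)) * -2)) x :=
    ((((hasDerivAt_id x).const_mul 2).neg.exp).const_mul a).add_const b |>.congr_deriv (by simp)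
  refine ((h_exp.log h_pos.ne').neg.div_const 2).congr_deriv ?_
  have h_inv : exp (-(2 * x)) * exp (2 * x) = 1 := by rw [← exp_add]; simp
  field_simp
  linear_combination a * b * h_inv

theorem tendsto_neg_log_mul_exp_add_div_two (hb : b ≠ 0) :
    Tendsto (fun x => -log (a * exp (-(2 * x)) + b) / 2) atTop (nhds (-log b / 2)) := by
  have h : Tendsto (fun x : ℝ => a * exp (-(2 * x)) + b) atTop (nhds b) := by
    simpa using ((tendsto_exp_atBot.comp (tendsto_neg_atTop_atBot.comp
      (tendsto_id.const_mul_atTop two_pos))).const_mul a).add_const b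
  exact ((continuousAt_log hb).tendsto.comp h).neg.div_const 2

theorem integrableOn_div_add_mul_exp (ha : 0 ≤ a) (hb : 0 < b) :
    IntegrableOn (fun x => a / (a + b * exp (2 * x))) (Ioi 0) :=
  integrableOn_Ioi_deriv_of_nonneg' (fun x _ => hasDerivAt_neg_log_mul_exp_add_div_two ha hb x)
    (fun x _ => by positivity) (tendsto_neg_log_mul_exp_add_div_two (a := a) hb.ne')

theorem integral_div_add_mul_exp (ha : 0 ≤ a) (hb : 0 < b) :
    ∫ x in Ioi 0, a / (a + b * exp (2 * x)) = (log (a + b) - log b) / 2 := by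
  rw [integral_Ioi_of_hasDerivAt_of_nonneg'
    (fun x _ => hasDerivAt_neg_log_mul_exp_add_div_two ha hb x)
    (fun x _ => by positivity) (tendsto_neg_log_mul_exp_add_div_two (a := a) hb.ne')]
  simp only [mul_zero, neg_zero, exp_zero, mul_one]
  ring

end ExpIntegral

theorem integrableOn_and_integral_Ioi_swap_div_add_mul_exp {w a b : ℝ → ℝ}
    (hw_meas : Measurable w) (ha_meas : Measurable a) (hb_meas : Measurable b)
    (hw : ∀ y > 0, 0 ≤ w y) (ha : ∀ y > 0, 0 ≤ a y) (hb : ∀ y > 0, 0 < b y)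
    (h_int : IntegrableOn (fun y => w y * ((log (a y + b y) - log (b y)) / 2)) (Ioi 0)) :
    IntegrableOn (fun x => ∫ y in Ioi 0, w y * (a y / (a y + b y * exp (2 * x)))) (Ioi 0) ∧
      ∫ x in Ioi 0, ∫ y in Ioi 0, w y * (a y / (a y + b y * exp (2 * x))) =
        ∫ y in Ioi 0, w y * ((log (a y + b y) - log (b y)) / 2) := by
  have h_inner : ∀ y > 0,
      ∫ x in Ioi 0, w y * (a y / (a y + b y * exp (2 * x))) =
        w y * ((log (a y + b y) - log (b y)) / 2) := fun y hy => by
    rw [integral_const_mul, integral_div_add_mul_exp (ha y hy) (hb y hy)]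
  have h_prod : Integrable (uncurry fun x y => w y * (a y / (a y + b y * exp (2 * x))))
      ((volume.restrict (Ioi 0)).prod (volume.restrict (Ioi 0))) := by
    refine integrable_uncurry_of_nonneg (by fun_prop) ?_ ?_ ?_
    · filter_upwards [ae_restrict_mem measurableSet_Ioi] with y hy
      have := ha y hy; have := hb y hy; have := hw y hy
      exact ae_of_all _ fun x => by positivity
    · filter_upwards [ae_restrict_mem measurableSet_Ioi] with y hy
      exact (integrableOn_div_add_mul_exp (ha y hy) (hb y hy)).const_mul (w y)
    · exact h_int.congr_fun (fun y hy => (h_inner y hy).symm) measurableSet_Ioi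
  refine ⟨h_prod.integral_prod_left, ?_⟩
  rw [integral_integral_swap h_prod]
  exact setIntegral_congr_fun measurableSet_Ioi h_inner

theorem abs_log_le_two_mul_rpow_neg_half_add {t : ℝ} (ht : 0 < t) :
    |log t| ≤ 2 * t ^ (-(1 / 2) : ℝ) + t := by
  have h_small : -log t ≤ 2 * t ^ (-(1 / 2) : ℝ) := by
    have := log_le_sub_one_of_pos (rpow_pos_of_pos ht (-(1 / 2)))
    rw [log_rpow ht] at this
    linarith
  have h_large : log t ≤ t := log_le_self ht.le
  have : 0 ≤ 2 * t ^ (-(1 / 2) : ℝ) := by positivity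
  rw [abs_le]; constructor <;> linarith

theorem integrableOn_log_mul_exp_neg :
    IntegrableOn (fun t => log t * exp (-t)) (Ioi 0) := by
  have h_gamma (s : ℝ) (hs : 0 < s) := GammaIntegral_convergent hs
  refine (((h_gamma (1 / 2) (by norm_num)).const_mul 2).add (h_gamma 2 two_pos)).mono'
    (by fun_prop) ?_
  filter_upwards [ae_restrict_mem measurableSet_Ioi] with t (ht : 0 < t)
  rw [norm_mul, norm_of_nonneg (exp_pos _).le, norm_eq_abs]
  calc |log t| * exp (-t) ≤ (2 * t ^ (-(1 / 2) : ℝ) + t) * exp (-t) := by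
        gcongr; exact abs_log_le_two_mul_rpow_neg_half_add ht
    _ = _ := by
        rw [show (1 / 2 : ℝ) - 1 = -(1 / 2) by norm_num, show (2 : ℝ) - 1 = 1 by norm_num,
          Pi.add_apply, rpow_one]
        ring

theorem integral_log_mul_exp_neg :
    ∫ t in Ioi 0, log t * exp (-t) = -eulerMascheroniConstant := by
  have h_complex :
      HasDerivAt Complex.GammaIntegral ((∫ t in Ioi 0, log t * exp (-t) : ℝ) : ℂ) 1 := by
    convert Complex.hasDerivAt_GammaIntegral (s := 1) (by norm_num) using 1
    rw [← integral_complex_ofReal]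
    refine setIntegral_congr_fun measurableSet_Ioi fun t _ => ?_
    push_cast
    rw [sub_self, Complex.cpow_zero, one_mul]
  have h_real : HasDerivAt Gamma (∫ t in Ioi 0, log t * exp (-t)) 1 := by
    refine (h_complex.real_of_complex.congr_of_eventuallyEq ?_).congr_deriv (by simp)
    filter_upwards [eventually_gt_nhds one_pos] with x hx
    rw [← Complex.Gamma_eq_integral (by simpa using hx), Complex.Gamma_ofReal, Complex.ofReal_re]
  exact h_real.unique hasDerivAt_Gamma_one

theorem integrableOn_exp_neg_mul_log_one_add :
    IntegrableOn (fun y => exp (-y) * log (1 + y)) (Ioi 0) := by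
  refine (GammaIntegral_convergent two_pos).mono' (by fun_prop) ?_
  filter_upwards [ae_restrict_mem measurableSet_Ioi] with y (hy : 0 < y)
  rw [norm_mul, norm_of_nonneg (exp_pos _).le, norm_of_nonneg (log_nonneg (by linarith)),
    show (2 : ℝ) - 1 = 1 by norm_num, rpow_one]
  gcongr
  linarith [log_le_sub_one_of_pos (by linarith : 0 < 1 + y)]

theorem integrableOn_exp_neg_mul_log_one_add_sub_log_div_two :
    IntegrableOn (fun y => exp (-y) * ((log (1 + y) - log y) / 2)) (Ioi 0) :=
  IntegrableOn.congr_fun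
    ((integrableOn_exp_neg_mul_log_one_add.sub integrableOn_log_mul_exp_neg).div_const 2)
    (fun y _ => by simp only [Pi.sub_apply]; ring) measurableSet_Ioi

theorem integrableOn_exp_neg_mul_log_one_add_div_two :
    IntegrableOn (fun y => exp (-y) * (log (1 + y) / 2)) (Ioi 0) :=
  IntegrableOn.congr_fun (integrableOn_exp_neg_mul_log_one_add.div_const 2)
    (fun y _ => by ring) measurableSet_Ioi

noncomputable def fluctuationTail (x : ℝ) : ℝ :=
  ∫ y in Ioi 0, exp (-y) / (1 + exp (2 * x) * y)

theorem integrableOn_fluctuationTail_integrand (x : ℝ) :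
    IntegrableOn (fun y => exp (-y) / (1 + exp (2 * x) * y)) (Ioi 0) := by
  refine (integrableOn_exp_neg_Ioi 0).mono' (Measurable.aestronglyMeasurable (by fun_prop)) ?_
  filter_upwards [ae_restrict_mem measurableSet_Ioi] with y (hy : 0 < y)
  rw [norm_of_nonneg (by positivity)]
  exact div_le_self (exp_pos _).le (by nlinarith [exp_pos (2 * x)])

theorem fluctuationTail_nonneg (x : ℝ) : 0 ≤ fluctuationTail x :=
  setIntegral_nonneg measurableSet_Ioi fun y (hy : 0 < y) => by positivity

theorem fluctuationTail_eq_integral (x : ℝ) :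
    fluctuationTail x = ∫ y in Ioi 0, exp (-y) * (1 / (1 + y * exp (2 * x))) :=
  setIntegral_congr_fun measurableSet_Ioi fun y _ => by
    rw [mul_one_div, mul_comm (exp (2 * x))]

theorem one_sub_fluctuationTail_neg (x : ℝ) :
    1 - fluctuationTail (-x) = ∫ y in Ioi 0, exp (-y) * (y / (y + exp (2 * x))) := by
  have h_one : ∫ y in Ioi (0 : ℝ), exp (-y) = 1 := by simpa using integral_exp_neg_Ioi 0
  conv_lhs => rw [← h_one]
  rw [fluctuationTail, ← integral_sub (integrableOn_exp_neg_Ioi 0)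
    (integrableOn_fluctuationTail_integrand (-x))]
  refine setIntegral_congr_fun measurableSet_Ioi fun y (hy : 0 < y) => ?_
  have h_inv : exp (-(2 * x)) * exp (2 * x) = 1 := by rw [← exp_add]; simp
  have h_den : 0 < 1 + exp (2 * -x) * y := by positivity
  field_simp
  linear_combination y * h_inv

theorem integrableOn_and_integral_fluctuationTail :
    IntegrableOn fluctuationTail (Ioi 0) ∧
      ∫ x in Ioi 0, fluctuationTail x = ∫ y in Ioi 0, exp (-y) * ((log (1 + y) - log y) / 2) := by
  rw [funext fluctuationTail_eq_integral]
  refine integrableOn_and_integral_Ioi_swap_div_add_mul_exp (w := fun y => exp (-y))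
    (a := fun _ => 1) (b := fun y => y) (by fun_prop) measurable_const measurable_id
    (fun _ _ => (exp_pos _).le) (fun _ _ => zero_le_one) (fun _ hy => hy) ?_
  exact integrableOn_exp_neg_mul_log_one_add_sub_log_div_two

theorem integrableOn_and_integral_one_sub_fluctuationTail_neg :
    IntegrableOn (fun x => 1 - fluctuationTail (-x)) (Ioi 0) ∧
      ∫ x in Ioi 0, (1 - fluctuationTail (-x)) = ∫ y in Ioi 0, exp (-y) * (log (1 + y) / 2) := by
  simp only [one_sub_fluctuationTail_neg]
  have h_log : ∀ y, (log (y + 1) - log 1) / 2 = log (1 + y) / 2 := fun y => by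
    rw [log_one, sub_zero, add_comm]
  obtain ⟨h_int, h_eq⟩ := integrableOn_and_integral_Ioi_swap_div_add_mul_exp
    (w := fun y => exp (-y)) (a := fun y => y) (b := fun _ => 1) (by fun_prop) measurable_id
    measurable_const (fun _ _ => (exp_pos _).le) (fun _ hy => le_of_lt hy) (fun _ _ => one_pos)
    (by simpa only [h_log] using integrableOn_exp_neg_mul_log_one_add_div_two)
  exact ⟨by simpa only [one_mul] using h_int, by simpa only [h_log, one_mul] using h_eq⟩

theorem integral_fluctuationTail_sub_integral_one_sub_fluctuationTail_neg :
    (∫ x in Ioi 0, fluctuationTail x) - ∫ x in Ioi 0, (1 - fluctuationTail (-x)) =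
      eulerMascheroniConstant / 2 := by
  rw [integrableOn_and_integral_fluctuationTail.2,
    integrableOn_and_integral_one_sub_fluctuationTail_neg.2,
    ← integral_sub integrableOn_exp_neg_mul_log_one_add_sub_log_div_two
      integrableOn_exp_neg_mul_log_one_add_div_two]
  calc _ = ∫ y in Ioi 0, -(1 / 2) * (log y * exp (-y)) := by congr 1; ext y; ring
    _ = eulerMascheroniConstant / 2 := by rw [integral_const_mul, integral_log_mul_exp_neg]; ring

/-- The limiting fluctuation `T` of the rescaled small-world distance has
mean `γ/2`, where `γ` is the Euler–Mascheroni constant. -/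
theorem limiting_mean_eulerMascheroni
    {Ω : Type*} [MeasurableSpace Ω] (μ : Measure Ω) [IsProbabilityMeasure μ]
    (T : Ω → ℝ) (hT : Measurable T)
    (htail : ∀ x : ℝ, μ {ω | x < T ω}
      = ENNReal.ofReal (∫ y in Set.Ioi (0 : ℝ),
          Real.exp (-y) / (1 + Real.exp (2 * x) * y))) :
    ∫ ω, T ω ∂μ = Real.eulerMascheroniConstant / 2 := by
  have h_gt : ∀ x, μ.real {ω | x < T ω} = fluctuationTail x := fun x => by
    rw [measureReal_def, htail, ← fluctuationTail, ENNReal.toReal_ofReal (fluctuationTail_nonneg x)]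
  have h_le : ∀ x, μ.real {ω | T ω ≤ -x} = 1 - fluctuationTail (-x) := fun x => by
    rw [← h_gt, ← probReal_compl_eq_one_sub (measurableSet_lt measurable_const hT)]
    congr 1; ext ω; simp
  have h_layerCake :=
    integrable_and_integral_eq_integral_measureReal_lt_sub (μ := μ) hT.aemeasurable
      (by simpa only [h_gt] using integrableOn_and_integral_fluctuationTail.1)
      (by simpa only [h_le] using integrableOn_and_integral_one_sub_fluctuationTail_neg.1)
  simpa only [h_gt, h_le, integral_fluctuationTail_sub_integral_one_sub_fluctuationTail_neg]
    using h_layerCake.2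
end

section
/- Let r ≥ 1 and c > 0, and let A be the (r+1)×(r+1) matrix with A_{i+1,i} = i+1 for 0 ≤ i ≤ r-1 (subdiagonal entries 1, 2, …, r), A_{0,r-1} = c (entry c in row 0, column r-1), and all other entries 0. Then the characteristic polynomial of A is λ^{r+1} - (r-1)!·c·λ, so the eigenvalues of A are 0 together with the r complex roots of λ^r = (r-1)!·c. -/
open Polynomial Finset Equiv

lemma cyc_val (r : ℕ) (hr : 2 ≤ r) (i : Fin (r+1)) :
    ((Fin.cycleRange (⟨r-1, by omega⟩ : Fin (r+1)) i : Fin (r+1)) : ℕ) =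
      if (i:ℕ) < r-1 then (i:ℕ)+1 else if (i:ℕ) = r-1 then 0 else (i:ℕ) := by
  rcases lt_trichotomy (i:ℕ) (r-1) with h|h|h
  · rw [if_pos h, Fin.coe_cycleRange_of_lt]
    exact h
  · rw [if_neg (by omega), if_pos h]
    have hi : i = (⟨r-1, by omega⟩ : Fin (r+1)) := Fin.ext h
    rw [hi, Fin.cycleRange_self, Fin.val_zero]
  · rw [if_neg (by omega), if_neg (by omega), Fin.cycleRange_of_gt]
    exact h

lemma perm_classify (r : ℕ) (hr : 2 ≤ r) (σ : Equiv.Perm (Fin (r+1)))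
    (h : ∀ i : Fin (r+1), σ i = i ∨ ((σ i : ℕ) = (i:ℕ)+1) ∨ ((i:ℕ) = r-1 ∧ (σ i : ℕ) = 0)) :
    σ = 1 ∨ σ = Fin.cycleRange (⟨r-1, by omega⟩ : Fin (r+1)) := by
  have hsum : ∑ i : Fin (r+1), ((σ i : ℕ)) = ∑ i : Fin (r+1), (i:ℕ) :=
    Equiv.sum_comp σ (fun i => (i : ℕ))
  by_cases h0 : (σ (⟨r-1, by omega⟩ : Fin (r+1)) : ℕ) = 0
  · right
    set p : Fin (r+1) := (⟨r-1, by omega⟩ : Fin (r+1)) with hp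
    have hsum2 : ∑ i : Fin (r+1), ((Fin.cycleRange p i : ℕ)) = ∑ i : Fin (r+1), (i:ℕ) :=
      Equiv.sum_comp (Fin.cycleRange p) (fun i => (i : ℕ))
    have hle : ∀ i ∈ Finset.univ, (σ i : ℕ) ≤ ((Fin.cycleRange p i : Fin (r+1)) : ℕ) := by
      intro i _
      rw [cyc_val r hr i]
      rcases lt_trichotomy (i:ℕ) (r-1) with hi|hi|hi
      · rw [if_pos hi]
        rcases h i with h'|h'|h'
        · rw [h']; omega
        · omega
        · omega
      · rw [if_neg (by omega), if_pos hi]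
        have : i = p := Fin.ext hi
        rw [this]; omega
      · rw [if_neg (by omega), if_neg (by omega)]
        rcases h i with h'|h'|h'
        · rw [h']
        · have := (σ i).isLt; omega
        · omega
    have heq := (Finset.sum_eq_sum_iff_of_le hle).mp (hsum.trans hsum2.symm)
    exact Equiv.ext fun i => Fin.ext (heq i (Finset.mem_univ i))
  · left
    have hle : ∀ i : Fin (r+1), i ∈ Finset.univ → ((i : ℕ) ≤ (σ i : ℕ)) := by
      intro i _
      rcases h i with h'|h'|h'
      · rw [h']
      · omega
      · have : i = (⟨r-1, by omega⟩ : Fin (r+1)) := Fin.ext h'.1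
        rw [this] at h'
        exact absurd h'.2 h0
    have heq := (Finset.sum_eq_sum_iff_of_le hle).mp hsum.symm
    refine Equiv.ext fun i => ?_
    rw [Equiv.Perm.one_apply]
    exact Fin.ext (heq i (Finset.mem_univ i)).symm

/-- Characteristic polynomial of the moment-evolution matrix of the
`r`-dimensional growth process. -/
theorem growth_matrix_charpoly (r : ℕ) (hr : 1 ≤ r) (c : ℝ) (hc : 0 < c)
    (A : Matrix (Fin (r + 1)) (Fin (r + 1)) ℂ)
    (hA : ∀ i j : Fin (r + 1), A i j =
      (if (i : ℕ) = (j : ℕ) + 1 then ((j : ℕ) + 1 : ℂ) else 0)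
      + (if (i : ℕ) = 0 ∧ (j : ℕ) = r - 1 then (c : ℂ) else 0)) :
    A.charpoly = X ^ (r + 1) - C (((r - 1).factorial : ℂ) * (c : ℂ)) * X
    ∧ ∀ z : ℂ, A.charpoly.IsRoot z ↔ z = 0 ∨ z ^ r = ((r - 1).factorial : ℂ) * (c : ℂ) := by
  have main : A.charpoly = X ^ (r + 1) - C (((r - 1).factorial : ℂ) * (c : ℂ)) * X := by
    rcases Nat.lt_or_ge r 2 with h2 | h2
    · -- r = 1
      have hr1 : r = 1 := by omega
      subst hr1
      have h00 : A 0 0 = (c : ℂ) := by rw [hA]; norm_num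
      have h01 : A 0 1 = 0 := by rw [hA]; norm_num
      have h11 : A 1 1 = 0 := by rw [hA]; norm_num
      rw [Matrix.charpoly, Matrix.det_fin_two,
        Matrix.charmatrix_apply_eq, Matrix.charmatrix_apply_eq,
        Matrix.charmatrix_apply_ne _ _ _ (by decide), h00, h01, h11]
      simp [Nat.factorial]
      ring
    · -- r ≥ 2
      set p : Fin (r+1) := (⟨r-1, by omega⟩ : Fin (r+1)) with hp
      set σ₁ : Equiv.Perm (Fin (r+1)) := Fin.cycleRange p with hσ₁
      have hpv : (p : ℕ) = r - 1 := rfl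
      have hdiag : ∀ i : Fin (r+1), A i i = 0 := by
        intro i
        rw [hA, if_neg (by omega), if_neg (by rintro ⟨a, b⟩; omega), add_zero]
      have hsub : ∀ i j : Fin (r+1), (i:ℕ) = (j:ℕ)+1 → A i j = ((j : ℕ) + 1 : ℂ) := by
        intro i j hij
        rw [hA, if_pos hij, if_neg (by rintro ⟨a, b⟩; omega), add_zero]
      have htop : A 0 p = (c : ℂ) := by
        rw [hA]
        rw [if_neg (by rw [Fin.val_zero, hpv]; omega), if_pos (by rw [Fin.val_zero, hpv]; omega),
          zero_add]
      have hzero : ∀ i j : Fin (r+1), ¬((i:ℕ) = (j:ℕ)+1) → ¬((i:ℕ) = 0 ∧ (j:ℕ) = r-1) →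
          A i j = 0 := by
        intro i j h1 h2
        rw [hA, if_neg h1, if_neg h2, add_zero]
      have hne : (1 : Equiv.Perm (Fin (r+1))) ≠ σ₁ := by
        intro hcontra
        have h1 : ((σ₁ p : Fin (r+1)) : ℕ) = 0 := by rw [hσ₁, Fin.cycleRange_self]; rfl
        rw [← hcontra] at h1
        simp only [Equiv.Perm.one_apply] at h1
        omega
      rw [Matrix.charpoly, Matrix.det_apply']
      rw [← Finset.sum_subset (Finset.subset_univ ({1, σ₁} : Finset (Equiv.Perm (Fin (r+1)))))]
      · rw [Finset.sum_pair hne]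
        -- identity term
        have hid : ∀ i : Fin (r+1), Matrix.charmatrix A ((1 : Equiv.Perm (Fin (r+1))) i) i
            = (X : ℂ[X]) := by
          intro i
          rw [Equiv.Perm.one_apply, Matrix.charmatrix_apply_eq, hdiag, map_zero, sub_zero]
        have hT1 : ((Equiv.Perm.sign (1 : Equiv.Perm (Fin (r+1))) : ℤ) : ℂ[X])
            * ∏ i, Matrix.charmatrix A ((1 : Equiv.Perm (Fin (r+1))) i) i = X ^ (r+1) := by
          rw [Finset.prod_congr rfl (fun i _ => hid i), Finset.prod_const, Finset.card_univ,
            Fintype.card_fin]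
          simp
        -- cycle term
        have hf : ∀ i : Fin (r+1), Matrix.charmatrix A (σ₁ i) i =
            (if (i:ℕ) < r-1 then -C (((i:ℕ) : ℂ) + 1) else
              if (i:ℕ) = r-1 then -(C (c : ℂ)) else (X : ℂ[X])) := by
          intro i
          have hv : ((σ₁ i : Fin (r+1)) : ℕ) =
              if (i:ℕ) < r-1 then (i:ℕ)+1 else if (i:ℕ) = r-1 then 0 else (i:ℕ) :=
            cyc_val r h2 i
          rcases lt_trichotomy (i:ℕ) (r-1) with hi|hi|hi
          · rw [if_pos hi] at hv
            rw [if_pos hi]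
            have hne' : σ₁ i ≠ i := by
              intro hcontra
              rw [hcontra] at hv; omega
            rw [Matrix.charmatrix_apply_ne _ _ _ hne']
            exact congrArg (fun t => -C t) (hsub _ _ hv)
          · rw [if_neg (by omega), if_pos hi] at hv
            rw [if_neg (by omega), if_pos hi]
            have hiz : σ₁ i = 0 := Fin.ext (by simpa using hv)
            have hip : i = p := Fin.ext (by rw [hpv]; exact hi)
            have hne' : σ₁ i ≠ i := by
              rw [hiz, hip]
              intro hcontra
              have h0 := congrArg Fin.val hcontra
              rw [Fin.val_zero, hpv] at h0
              omega
            rw [Matrix.charmatrix_apply_ne _ _ _ hne', hiz, hip, htop]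
          · rw [if_neg (by omega), if_neg (by omega)] at hv
            rw [if_neg (by omega), if_neg (by omega)]
            have hfix : σ₁ i = i := Fin.ext hv
            rw [hfix, Matrix.charmatrix_apply_eq, hdiag, map_zero, sub_zero]
        have hconv : (∏ i : Fin (r+1), (if (i:ℕ) < r-1 then -C (((i:ℕ) : ℂ) + 1) else
              if (i:ℕ) = r-1 then -(C (c : ℂ)) else (X : ℂ[X])))
            = ∏ k ∈ Finset.range (r+1), (if k < r-1 then -C ((k : ℂ) + 1) else
              if k = r-1 then -(C (c : ℂ)) else (X : ℂ[X])) :=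
          Fin.prod_univ_eq_prod_range (fun k => if k < r-1 then -C ((k : ℂ) + 1) else
            if k = r-1 then -(C (c : ℂ)) else (X : ℂ[X])) (r+1)
        have hprod : ∏ i, Matrix.charmatrix A (σ₁ i) i
            = ((-1 : ℂ[X]) ^ (r-1) * C (((r-1).factorial : ℂ))) * (-(C (c:ℂ))) * X := by
          rw [Finset.prod_congr rfl (fun i _ => hf i), hconv]
          have hrw : r + 1 = (r-1) + 1 + 1 := by omega
          rw [hrw, Finset.prod_range_succ, Finset.prod_range_succ]
          have hlast : (if r-1+1 < r-1 then -C (((r-1+1 : ℕ) : ℂ) + 1) else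
              if r-1+1 = r-1 then -(C (c:ℂ)) else (X:ℂ[X])) = (X:ℂ[X]) := by
            rw [if_neg (by omega), if_neg (by omega)]
          have hmid : (if r-1 < r-1 then -C (((r-1 : ℕ) : ℂ) + 1) else
              if r-1 = r-1 then -(C (c:ℂ)) else (X:ℂ[X])) = -(C (c:ℂ)) := by
            rw [if_neg (by omega), if_pos rfl]
          rw [hlast, hmid]
          have hbody : ∀ k ∈ Finset.range (r-1), (if k < r-1 then -C ((k : ℂ) + 1) else
              if k = r-1 then -(C (c : ℂ)) else (X : ℂ[X])) = (-1) * C ((k : ℂ) + 1) := by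
            intro k hk
            rw [if_pos (Finset.mem_range.mp hk)]
            ring
          rw [Finset.prod_congr rfl hbody, Finset.prod_mul_distrib, Finset.prod_const,
            Finset.card_range]
          have hfact : ∏ k ∈ Finset.range (r-1), ((k : ℂ) + 1) = (((r-1).factorial : ℂ)) := by
            rw [← Finset.prod_range_add_one_eq_factorial (r-1), Nat.cast_prod]
            exact Finset.prod_congr rfl (fun k _ => by push_cast; ring)
          rw [← map_prod, hfact]
        have hsign : ((Equiv.Perm.sign σ₁ : ℤ) : ℂ[X]) = (-1 : ℂ[X]) ^ (r-1) := by
          rw [hσ₁, Fin.sign_cycleRange, hpv]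
          push_cast
          ring
        rw [hT1, hprod, hsign]
        have hpow : ((-1 : ℂ[X]) ^ (r-1)) * ((-1 : ℂ[X]) ^ (r-1)) = 1 := by
          rw [← pow_add, ← two_mul, pow_mul, neg_one_sq, one_pow]
        rw [map_mul]
        calc (X:ℂ[X]) ^ (r+1) + (-1:ℂ[X])^(r-1) * ((-1:ℂ[X])^(r-1) * C (((r-1).factorial : ℂ))
              * (-(C (c:ℂ))) * X)
            = X ^ (r+1) + ((-1:ℂ[X])^(r-1) * (-1:ℂ[X])^(r-1)) * (C (((r-1).factorial : ℂ))
              * (-(C (c:ℂ))) * X) := by ring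
          _ = X ^ (r + 1) - C (((r - 1).factorial : ℂ)) * C ((c:ℂ)) * X := by rw [hpow]; ring
      · intro σ _ hσ
        simp only [Finset.mem_insert, Finset.mem_singleton] at hσ
        push_neg at hσ
        by_cases hcl : ∀ i : Fin (r+1), σ i = i ∨ ((σ i : ℕ) = (i:ℕ)+1)
            ∨ ((i:ℕ) = r-1 ∧ (σ i : ℕ) = 0)
        · rcases perm_classify r h2 σ hcl with h | h
          · exact absurd h hσ.1
          · exact absurd h hσ.2
        · push_neg at hcl
          obtain ⟨i, hi1, hi2, hi3⟩ := hcl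
          have hAz : A (σ i) i = 0 := by
            apply hzero _ _ hi2
            intro ⟨ha, hb⟩
            exact hi3 hb ha
          have hcz : Matrix.charmatrix A (σ i) i = 0 := by
            rw [Matrix.charmatrix_apply_ne _ _ _ hi1, hAz, map_zero, neg_zero]
          exact mul_eq_zero_of_right _ (Finset.prod_eq_zero (Finset.mem_univ i) hcz)
  refine ⟨main, ?_⟩
  intro z
  rw [Polynomial.IsRoot, main]
  simp only [eval_sub, eval_mul, eval_pow, eval_X, eval_C]
  have hfac : z ^ (r+1) - ((r-1).factorial : ℂ) * (c:ℂ) * z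
      = (z ^ r - ((r-1).factorial : ℂ) * (c:ℂ)) * z := by ring
  rw [hfac, mul_eq_zero, sub_eq_zero]
  tauto
end

section
/- Let r ≥ 1, c > 0, λ_0 = ((r-1)!·c)^{1/r}, and ω a complex r-th root of unity, λ = λ_0 ω. Then the vector e = (1, λ^{-1}, 2λ^{-2}, …, (r-1)!λ^{-(r-1)}, r!λ^{-r})^T satisfies A e = λ e, where A is the (r+1)×(r+1) matrix with subdiagonal entries 1, 2, …, r, entry c in position (0, r-1), and zeros elsewhere. Moreover (r-1)!λ^{-(r-1)} = λ/c and r!λ^{-r} = r/c. -/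
/-! With `μ = λ⁻¹`, row `k + 1` of `A e = λ e` reads `(k + 1) · k! μ^k = λ · (k + 1)! μ^(k + 1)`,
which holds for every `λ ≠ 0`; the single remaining row `0` reads `c (r - 1)! μ^(r - 1) = λ`,
i.e. `λ^r = (r - 1)! c`, and this is exactly what `λ = ((r - 1)! c)^(1/r) ω` with `ω^r = 1` gives. -/

open Matrix

variable {K : Type*} [Field K]

def growthMatrix (r : ℕ) (c : K) : Matrix (Fin (r + 1)) (Fin (r + 1)) K := fun i j =>
  (if (i : ℕ) = (j : ℕ) + 1 then ((j : ℕ) + 1 : K) else 0)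
    + (if (i : ℕ) = 0 ∧ (j : ℕ) = r - 1 then c else 0)

def factorialPowVec (n : ℕ) (μ : K) : Fin n → K := fun k => ((k : ℕ).factorial : K) * μ ^ (k : ℕ)

theorem growthMatrix_mulVec_zero (r : ℕ) (c : K) (v : Fin (r + 1) → K) :
    (growthMatrix r c *ᵥ v) 0 = c * v ⟨r - 1, by omega⟩ := by
  rw [Matrix.mulVec, dotProduct, Finset.sum_eq_single ⟨r - 1, by omega⟩]
  · simp [growthMatrix]
  · intro j _ hj
    have hj' : (j : ℕ) ≠ r - 1 := fun h => hj (Fin.ext h)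
    simp [growthMatrix, hj']
  · simp

theorem growthMatrix_mulVec_succ (r : ℕ) (c : K) (v : Fin (r + 1) → K) (k : Fin r) :
    (growthMatrix r c *ᵥ v) k.succ = ((k : ℕ) + 1 : K) * v k.castSucc := by
  rw [Matrix.mulVec, dotProduct, Finset.sum_eq_single k.castSucc]
  · simp [growthMatrix]
  · intro j _ hj
    simp [growthMatrix, Fin.ext_iff] at hj ⊢
    omega
  · simp

section Eigen

variable [CharZero K] {r : ℕ} {c lam : K}

theorem ne_zero_of_pow_eq_factorial_mul (hr : r ≠ 0) (hc : c ≠ 0)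
    (hlam : lam ^ r = ((r - 1).factorial : K) * c) : lam ≠ 0 := by
  rintro rfl
  rw [zero_pow hr] at hlam
  exact mul_ne_zero (Nat.cast_ne_zero.mpr (Nat.factorial_ne_zero _)) hc hlam.symm

theorem factorial_pred_mul_inv_pow_pred (hr : r ≠ 0) (hc : c ≠ 0)
    (hlam : lam ^ r = ((r - 1).factorial : K) * c) :
    ((r - 1).factorial : K) * lam⁻¹ ^ (r - 1) = lam / c := by
  have hlam0 := ne_zero_of_pow_eq_factorial_mul hr hc hlam
  rw [eq_div_iff hc, mul_right_comm, ← hlam, ← pow_sub_one_mul hr, inv_pow]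
  field_simp

theorem factorial_mul_inv_pow (hr : r ≠ 0) (hc : c ≠ 0)
    (hlam : lam ^ r = ((r - 1).factorial : K) * c) :
    (r.factorial : K) * lam⁻¹ ^ r = r / c := by
  have hfac : ((r - 1).factorial : K) ≠ 0 := Nat.cast_ne_zero.mpr (Nat.factorial_ne_zero _)
  rw [← Nat.mul_factorial_pred hr, inv_pow, hlam]
  push_cast
  field_simp

theorem growthMatrix_mulVec_factorialPowVec (hr : r ≠ 0) (hc : c ≠ 0)
    (hlam : lam ^ r = ((r - 1).factorial : K) * c) :
    growthMatrix r c *ᵥ factorialPowVec (r + 1) lam⁻¹ = lam • factorialPowVec (r + 1) lam⁻¹ := by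
  have hlam0 := ne_zero_of_pow_eq_factorial_mul hr hc hlam
  ext i
  induction i using Fin.cases with
  | zero =>
    simp only [growthMatrix_mulVec_zero, factorialPowVec, factorial_pred_mul_inv_pow_pred hr hc hlam,
      Fin.val_zero, Nat.factorial_zero, pow_zero, Nat.cast_one, mul_one, Pi.smul_apply, smul_eq_mul]
    field_simp
  | succ k =>
    rw [growthMatrix_mulVec_succ]
    simp only [factorialPowVec, Fin.val_succ, Fin.val_castSucc, Nat.factorial_succ, Pi.smul_apply,
      smul_eq_mul, pow_succ]
    push_cast
    field_simp

end Eigen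

/-- Eigenvector computation for the moment-evolution matrix. -/
theorem growth_matrix_eigenvector (r : ℕ) (hr : 1 ≤ r) (c : ℝ) (hc : 0 < c)
    (lam0 : ℝ) (hlam0 : lam0 = (((r - 1).factorial : ℝ) * c) ^ ((1 : ℝ) / r))
    (ω : ℂ) (hω : ω ^ r = 1) (lam : ℂ) (hlam : lam = (lam0 : ℂ) * ω)
    (A : Matrix (Fin (r + 1)) (Fin (r + 1)) ℂ)
    (hA : ∀ i j : Fin (r + 1), A i j =
      (if (i : ℕ) = (j : ℕ) + 1 then ((j : ℕ) + 1 : ℂ) else 0)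
      + (if (i : ℕ) = 0 ∧ (j : ℕ) = r - 1 then (c : ℂ) else 0))
    (e : Fin (r + 1) → ℂ)
    (he : ∀ k : Fin (r + 1), e k = ((k : ℕ).factorial : ℂ) * lam⁻¹ ^ (k : ℕ)) :
    A.mulVec e = lam • e
    ∧ ((r - 1).factorial : ℂ) * lam⁻¹ ^ (r - 1) = lam / (c : ℂ)
    ∧ (r.factorial : ℂ) * lam⁻¹ ^ r = (r : ℂ) / (c : ℂ) := by
  have hr0 : r ≠ 0 := by omega
  have hc0 : (c : ℂ) ≠ 0 := Complex.ofReal_ne_zero.mpr hc.ne'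
  have hlam0r : lam0 ^ r = ((r - 1).factorial : ℝ) * c := by
    rw [hlam0, one_div, Real.rpow_inv_natCast_pow (by positivity) hr0]
  have hlamr : lam ^ r = ((r - 1).factorial : ℂ) * c := by
    rw [hlam, mul_pow, hω, mul_one]
    exact_mod_cast congrArg Complex.ofReal hlam0r
  obtain rfl : A = growthMatrix r (c : ℂ) := Matrix.ext hA
  obtain rfl : e = factorialPowVec (r + 1) lam⁻¹ := funext he
  exact ⟨growthMatrix_mulVec_factorialPowVec hr0 hc0 hlamr,
    factorial_pred_mul_inv_pow_pred hr0 hc0 hlamr, factorial_mul_inv_pow hr0 hc0 hlamr⟩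
end
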